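/- Assume R = DV is obtained by the lazy reduction of the cone filtration boundary matrix. Let (σ̄,τ̄) be a persistence pair of cone simplices with max σ = d > b = max τ (low R[τ̄] = σ̄). Then the relative cycle ẑ produced by Lift-Cycle(R[τ̄] ∩ K, (b,d), 0) is an apex representative in H(K̂[b,d)): [ẑ] lies neither in the image of H(K̂[b+1,d)) → H(K̂[b,d)) nor in the image of H(K̂[b,d+1)) → H(K̂[b,d)). -/

import Mathlib

open Finsupp
open scoped Classical

/-- A finite Δ-complex over a field `F`: each cell has a dimension, a boundary chain,
and an integer support interval `T(σ) = [tmin σ, tmax σ] ⊆ [0, n]`; whenever `σ` appears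
in `∂τ` one has `tmin σ < tmin τ < tmax τ < tmax σ`. -/
structure DeltaComplex (F : Type) [Field F] (n : ℤ) where
  Cell : Type
  deq : DecidableEq Cell
  fin : Fintype Cell
  dim : Cell → ℕ
  tmin : Cell → ℤ
  tmax : Cell → ℤ
  bdry : Cell → (Cell →₀ F)
  tmin_nonneg : ∀ σ, 0 ≤ tmin σ
  tmin_lt_tmax : ∀ σ, tmin σ < tmax σ
  tmax_le : ∀ σ, tmax σ ≤ n
  bdry_dim : ∀ τ σ, bdry τ σ ≠ 0 → dim σ + 1 = dim τ
  nest : ∀ τ σ, bdry τ σ ≠ 0 → tmin σ < tmin τ ∧ tmax τ < tmax σ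
  bdry_bdry : ∀ τ, ((bdry τ).sum fun σ a => a • bdry σ) = 0

attribute [instance] DeltaComplex.deq DeltaComplex.fin

variable {F : Type} [Field F] {n : ℤ}

/-- The boundary of a chain of `K`. -/
noncomputable def bd (K : DeltaComplex F n) (c : K.Cell →₀ F) : K.Cell →₀ F :=
  c.sum fun τ a => a • K.bdry τ

/-- A chain is supported on a set of cells. -/
def SuppOn {α β : Type} [Zero β] (c : α →₀ β) (S : α → Prop) : Prop :=
  ∀ x, c x ≠ 0 → S x

/-- Cells of the prism `K̂`: vertical cells `σ×{i}` and horizontal cells `σ×[i,i+1]`. -/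
inductive PCell (C : Type) where
  | vert : C → ℤ → PCell C
  | horiz : C → ℤ → PCell C
deriving DecidableEq

/-- Membership of a prism cell in the prism `K̂`. -/
def inPrism (K : DeltaComplex F n) : PCell K.Cell → Prop
  | .vert σ i => K.tmin σ ≤ i ∧ i ≤ K.tmax σ
  | .horiz σ i => K.tmin σ ≤ i ∧ i + 1 ≤ K.tmax σ

/-- Membership of a prism cell in the interlevel subcomplex `K̂_i^j` (cells `σ×T` with
`T ⊆ [i,j]`). -/
def inSub (K : DeltaComplex F n) (i j : ℤ) : PCell K.Cell → Prop
  | .vert σ t => (K.tmin σ ≤ t ∧ t ≤ K.tmax σ) ∧ i ≤ t ∧ t ≤ j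
  | .horiz σ t => (K.tmin σ ≤ t ∧ t + 1 ≤ K.tmax σ) ∧ i ≤ t ∧ t + 1 ≤ j

/-- The boundary of a single prism cell: `∂(τ×i) = (∂τ)×i` and
`∂(σ×[i,i+1]) = σ×(i+1) − σ×i − (∂σ)×[i,i+1]`. -/
noncomputable def pcellBd (K : DeltaComplex F n) : PCell K.Cell → (PCell K.Cell →₀ F)
  | .vert τ i => (K.bdry τ).sum fun σ a => Finsupp.single (PCell.vert σ i) a
  | .horiz σ i =>
      Finsupp.single (PCell.vert σ (i + 1)) 1 - Finsupp.single (PCell.vert σ i) 1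
        - (K.bdry σ).sum fun ρ a => Finsupp.single (PCell.horiz ρ i) a

/-- The boundary of a prism chain. -/
noncomputable def pbd (K : DeltaComplex F n) (c : PCell K.Cell →₀ F) : PCell K.Cell →₀ F :=
  c.sum fun x a => a • pcellBd K x

/-- `z` is a relative cycle of the pair of subcomplexes `(A, B)` of the prism. -/
def RelCycle (K : DeltaComplex F n) (A B : PCell K.Cell → Prop)
    (z : PCell K.Cell →₀ F) : Prop :=
  SuppOn z A ∧ SuppOn (pbd K z) B

/-- The homology class `[z] ∈ H(A,B)` lies in the image of the map
`H(A',B') → H(A,B)` induced by the inclusion of pairs `(A',B') ⊆ (A,B)`: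
there is a relative cycle `α` of `(A',B')` homologous to `z` within `(A,B)`. -/
def InImg (K : DeltaComplex F n) (A' B' A B : PCell K.Cell → Prop)
    (z : PCell K.Cell →₀ F) : Prop :=
  ∃ α β γ : PCell K.Cell →₀ F,
    RelCycle K A' B' α ∧ SuppOn β A ∧ SuppOn γ B ∧ z = α + pbd K β + γ

/-- The vertical prism chain `w × t`. -/
noncomputable def vchain (K : DeltaComplex F n) (w : K.Cell →₀ F) (t : ℤ) :
    PCell K.Cell →₀ F :=
  w.sum fun σ a => Finsupp.single (PCell.vert σ t) a

/-- A valid choice of times for Lift-Cycle: for every simplex `τ` of `z` with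
`T(τ) ∩ [b,d] ≠ ∅`, the chosen time satisfies `t τ ∈ T(τ) ∩ [b,d]`. -/
def ValidTimes (K : DeltaComplex F n) (z : K.Cell →₀ F) (b d : ℤ) (t : K.Cell → ℤ) : Prop :=
  ∀ τ, z τ ≠ 0 → K.tmin τ ≤ d → b ≤ K.tmax τ →
    K.tmin τ ≤ t τ ∧ t τ ≤ K.tmax τ ∧ b ≤ t τ ∧ t τ ≤ d

/-- The chain `ẑ` produced by `Lift-Cycle(z, (s,f), w₀)` with the choice of times `t`
(here `b = min s f`, `d = max s f`): the sum of the vertical cells `⟨τ,z⟩·(τ×t_τ)` over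
simplices `τ` of `z` with `T(τ) ∩ [b,d] ≠ ∅`, plus horizontal cells `σ×[k,k+1]`
(oriented from `s` to `f`) whose coefficient is the running sum
`⟨σ,w₀⟩ + Σ ⟨τ,z⟩·⟨σ,∂τ⟩` over the cofaces `τ` whose time `t_τ` has already been passed
when traversing from `s` to `f`. -/
noncomputable def liftCycle (K : DeltaComplex F n) (z : K.Cell →₀ F) (s f : ℤ)
    (w0 : K.Cell →₀ F) (t : K.Cell → ℤ) : PCell K.Cell →₀ F :=
  (∑ τ ∈ z.support.filter (fun τ => K.tmin τ ≤ max s f ∧ min s f ≤ K.tmax τ),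
      Finsupp.single (PCell.vert τ (t τ)) (z τ))
  + ∑ σ : K.Cell, ∑ k ∈ Finset.Icc (min s f) (max s f - 1),
      Finsupp.single (PCell.horiz σ k)
        ((if s ≤ f then (1 : F) else -1) *
          (w0 σ +
            ∑ τ ∈ z.support.filter (fun τ =>
                (K.tmin τ ≤ max s f ∧ min s f ≤ K.tmax τ) ∧
                  (if s ≤ f then t τ ≤ k else k + 1 ≤ t τ)),
              z τ * (K.bdry τ) σ))

/-- Cells of the cone `K̄ = ω ∗ K`: base simplices, the cone vertex `ω`,
and cone simplices `σ̄ = ω ∗ σ`. -/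
inductive CCell (C : Type) where
  | base : C → CCell C
  | omega : CCell C
  | cone : C → CCell C
deriving DecidableEq

/-- Boundary of a single cell of the cone `K̄`:
`∂σ` for base simplices, `0` for `ω`, and `∂(ω∗σ) = σ − ω∗∂σ` (minus `ω` when `σ` is a
vertex) for cone simplices. -/
noncomputable def ccellBd (K : DeltaComplex F n) : CCell K.Cell → (CCell K.Cell →₀ F)
  | .base σ => (K.bdry σ).sum fun ρ a => Finsupp.single (CCell.base ρ) a
  | .omega => 0
  | .cone σ =>
      Finsupp.single (CCell.base σ) 1
        - (K.bdry σ).sum (fun ρ a => Finsupp.single (CCell.cone ρ) a)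
        - (if K.dim σ = 0 then Finsupp.single CCell.omega 1 else 0)

/-- The boundary of a chain of the cone `K̄`. -/
noncomputable def cbd (K : DeltaComplex F n) (c : CCell K.Cell →₀ F) : CCell K.Cell →₀ F :=
  c.sum fun x a => a • ccellBd K x

/-- The restriction `c ∩ K` of a cone chain to the base simplices, as a chain in `K`. -/
noncomputable def basePart (K : DeltaComplex F n) (c : CCell K.Cell →₀ F) : K.Cell →₀ F :=
  c.sum fun x a =>
    match x with
    | .base σ => Finsupp.single σ a
    | .omega => 0
    | .cone _ => 0

/-- The restriction `c ∩ (K̄ − K)` of a cone chain to the cells not in the base. -/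
noncomputable def conePart (K : DeltaComplex F n) (c : CCell K.Cell →₀ F) :
    CCell K.Cell →₀ F :=
  c.sum fun x a =>
    match x with
    | .base _ => 0
    | .omega => Finsupp.single CCell.omega a
    | .cone ρ => Finsupp.single (CCell.cone ρ) a

/-- The order of the cells of `K̄` in the cone filtration: base simplices by increasing
`min σ`, then `ω`, then cone simplices by decreasing `max σ`, ties broken consistently
so that every prefix is a subcomplex. -/
structure ConeOrder (K : DeltaComplex F n) where
  pos : CCell K.Cell → ℕ
  inj : Function.Injective pos
  base_lt_base : ∀ σ τ : K.Cell, K.tmin σ < K.tmin τ → pos (.base σ) < pos (.base τ)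
  base_lt_omega : ∀ σ : K.Cell, pos (.base σ) < pos .omega
  omega_lt_cone : ∀ σ : K.Cell, pos .omega < pos (.cone σ)
  cone_lt_cone : ∀ σ τ : K.Cell, K.tmax τ < K.tmax σ → pos (.cone σ) < pos (.cone τ)
  faces_first : ∀ x y, (ccellBd K x) y ≠ 0 → pos y < pos x

/-- `σ` is the pivot (lowest nonzero entry) of the column (chain) `c`. -/
def IsLow (K : DeltaComplex F n) (O : ConeOrder K) (c : CCell K.Cell →₀ F)
    (σ : CCell K.Cell) : Prop :=
  c σ ≠ 0 ∧ ∀ ρ, c ρ ≠ 0 → O.pos ρ ≤ O.pos σ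

/-- `R = DV` is a decomposition of the boundary matrix `D` of the cone filtration:
`V` is invertible upper-triangular and `R` is reduced (pivots of nonzero columns lie
in pairwise distinct rows). -/
structure IsReduction (K : DeltaComplex F n) (O : ConeOrder K)
    (R V : CCell K.Cell → (CCell K.Cell →₀ F)) : Prop where
  rdv : ∀ τ, R τ = cbd K (V τ)
  upper : ∀ τ ρ, (V τ) ρ ≠ 0 → O.pos ρ ≤ O.pos τ
  diag : ∀ τ, (V τ) τ ≠ 0
  reduced : ∀ τ τ' σ, τ ≠ τ' → IsLow K O (R τ) σ → ¬ IsLow K O (R τ') σ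

/-- One run of the lazy (standard left-to-right) reduction of the column of `τ`:
starting from a column `c` (with coefficient vector `v`), while the column is nonzero
and its pivot collides with the pivot of an earlier (already reduced) column, subtract
the appropriate scalar multiple of that column. -/
inductive LazyReduces (K : DeltaComplex F n) (O : ConeOrder K)
    (R V : CCell K.Cell → (CCell K.Cell →₀ F)) (τ : CCell K.Cell) :
    (CCell K.Cell →₀ F) → (CCell K.Cell →₀ F) →
      (CCell K.Cell →₀ F) → (CCell K.Cell →₀ F) → Prop
  | done (c v : CCell K.Cell →₀ F)
      (h : ∀ σ, IsLow K O c σ → ∀ τ', O.pos τ' < O.pos τ → ¬ IsLow K O (R τ') σ) :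
      LazyReduces K O R V τ c v c v
  | step (c v c' v' : CCell K.Cell →₀ F) (τ' σ : CCell K.Cell)
      (hlt : O.pos τ' < O.pos τ) (hc : IsLow K O c σ) (hr : IsLow K O (R τ') σ)
      (next : LazyReduces K O R V τ (c - (c σ / ((R τ') σ)) • R τ')
        (v - (c σ / ((R τ') σ)) • V τ') c' v') :
      LazyReduces K O R V τ c v c' v'

/-- `R = DV` is obtained by the lazy reduction: every column `R τ` (with coefficient
column `V τ`) is the result of the lazy reduction of the boundary column of `τ`,
columns being processed from left to right. -/
def IsLazyReduction (K : DeltaComplex F n) (O : ConeOrder K)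
    (R V : CCell K.Cell → (CCell K.Cell →₀ F)) : Prop :=
  ∀ τ, LazyReduces K O R V τ (ccellBd K τ) (Finsupp.single τ 1) (R τ) (V τ)

/-!
Since the reduction is lazy and the pivot `σ̄` of `τ̄` is a cone cell, only cone columns are
ever subtracted from the column of `τ̄`; hence `V[τ̄] = ω ∗ v` and `R[τ̄] ∩ K = v`, where `v`
lives in `K_{≥b}` and `∂v` in `K_{≥d}`. The lift of a single simplex `τ` is `τ×t_τ` followed
by `(∂τ)×[t_τ,d]`, whose boundary telescopes to `(∂τ)×d`; so `ẑ` is a relative cycle.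
Projecting the prism onto `K` is a chain map, and turns a homology exhibiting `[ẑ]` in either
image into a decomposition `v = α + ∂β + γ` with `γ` in `K_{≥d}`. If `α` lies in `K_{≥b+1}`,
then `ω ∗ (α + γ) + β` is a chain before `τ̄` whose boundary has pivot `σ̄`, contradicting
that `R` is reduced. If `∂α` lies in `K_{≥d+1}`, then the coefficient of `σ` in `∂v`, which is
the pivot entry of `R[τ̄]`, vanishes.
-/

section SuppOn

variable {α : Type} {c c' : α →₀ F} {S : α → Prop}

lemma SuppOn.apply_eq_zero (h : SuppOn c S) {x : α} (hx : ¬ S x) : c x = 0 :=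
  not_not.mp (mt (h x) hx)

lemma SuppOn.mono {S' : α → Prop} (h : SuppOn c S) (hSS' : ∀ x, S x → S' x) : SuppOn c S' :=
  fun x hx => hSS' x (h x hx)

lemma SuppOn.add (h : SuppOn c S) (h' : SuppOn c' S) : SuppOn (c + c') S := by
  intro x hx
  by_contra hS
  exact hx (by simp [h.apply_eq_zero hS, h'.apply_eq_zero hS])

lemma SuppOn.neg (h : SuppOn c S) : SuppOn (-c) S :=
  fun x hx => h x (by simpa using hx)

lemma SuppOn.sub (h : SuppOn c S) (h' : SuppOn c' S) : SuppOn (c - c') S := by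
  simpa only [sub_eq_add_neg] using h.add h'.neg

lemma SuppOn.smul (h : SuppOn c S) (q : F) : SuppOn (q • c) S :=
  fun x hx => h x (right_ne_zero_of_mul hx)

lemma exists_ne_zero_of_mapDomain_ne_zero {β : Type} {f : α → β} {w : α →₀ F} {x : β}
    (h : mapDomain f w x ≠ 0) : ∃ ρ, x = f ρ ∧ w ρ ≠ 0 := by
  obtain ⟨ρ, hρ, rfl⟩ := Finset.mem_image.mp (mapDomain_support (mem_support_iff.mpr h))
  exact ⟨ρ, rfl, mem_support_iff.mp hρ⟩

end SuppOn

lemma Int.sum_Ico_sub {M : Type*} [AddCommGroup M] (g : ℤ → M) {s f : ℤ} (h : s ≤ f) :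
    ∑ k ∈ Finset.Ico s f, (g (k + 1) - g k) = g f - g s := by
  induction f, h using Int.leInduction with
  | base => simp
  | succ f hsf ih =>
    rw [← Finset.insert_Ico_right_eq_Ico_add_one hsf, Finset.sum_insert (by simp), ih]
    abel

section Chains

variable (K : DeltaComplex F n)

lemma bd_eq_linearCombination (c : K.Cell →₀ F) : bd K c = linearCombination F K.bdry c :=
  (linearCombination_apply F c).symm

lemma bd_zero : bd K 0 = 0 := by
  simp [bd]

lemma bd_add (c c' : K.Cell →₀ F) : bd K (c + c') = bd K c + bd K c' := by
  simp only [bd_eq_linearCombination, map_add]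

lemma bd_sub (c c' : K.Cell →₀ F) : bd K (c - c') = bd K c - bd K c' := by
  simp only [bd_eq_linearCombination, map_sub]

lemma bd_single (τ : K.Cell) (a : F) : bd K (single τ a) = a • K.bdry τ := by
  rw [bd_eq_linearCombination, linearCombination_single]

lemma bd_apply (c : K.Cell →₀ F) (ρ : K.Cell) :
    bd K c ρ = ∑ τ ∈ c.support, c τ * K.bdry τ ρ := by
  simp [bd, Finsupp.sum]

lemma bd_bd (c : K.Cell →₀ F) : bd K (bd K c) = 0 := by
  induction c using Finsupp.induction_linear with
  | zero => simp [bd]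
  | add c c' h h' => rw [bd_add, bd_add, h, h', add_zero]
  | single τ a =>
    rw [bd_single, bd_eq_linearCombination, map_smul, ← bd_eq_linearCombination, bd,
      K.bdry_bdry, smul_zero]

lemma bd_bdry (τ : K.Cell) : bd K (K.bdry τ) = 0 := by
  simpa [bd_single] using bd_bd K (single τ 1)

lemma exists_bdry_ne_zero_of_bd_ne_zero {c : K.Cell →₀ F} {ρ : K.Cell} (h : bd K c ρ ≠ 0) :
    ∃ τ, c τ ≠ 0 ∧ K.bdry τ ρ ≠ 0 := by
  rw [bd_apply] at h
  obtain ⟨τ, hτ, hne⟩ := Finset.exists_ne_zero_of_sum_ne_zero h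
  exact ⟨τ, mem_support_iff.mp hτ, right_ne_zero_of_mul hne⟩

lemma suppOn_bd_of_le_tmax {c : K.Cell →₀ F} {d : ℤ} (h : SuppOn c fun ρ => d ≤ K.tmax ρ) :
    SuppOn (bd K c) fun ρ => d < K.tmax ρ := by
  intro ρ hρ
  obtain ⟨τ, hτ, hface⟩ := exists_bdry_ne_zero_of_bd_ne_zero K hρ
  exact (h τ hτ).trans_lt (K.nest τ ρ hface).2

lemma suppOn_bd_of_tmin_le {c : K.Cell →₀ F} {d : ℤ} (h : SuppOn c fun ρ => K.tmin ρ ≤ d) :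
    SuppOn (bd K c) fun ρ => K.tmin ρ < d := by
  intro ρ hρ
  obtain ⟨τ, hτ, hface⟩ := exists_bdry_ne_zero_of_bd_ne_zero K hρ
  exact (K.nest τ ρ hface).1.trans_le (h τ hτ)

lemma bd_eq_of_eq_add_bd_add {v α β γ : K.Cell →₀ F} (hv : v = α + bd K β + γ) :
    bd K v = bd K α + bd K γ := by
  rw [hv, bd_add, bd_add, bd_bd, add_zero]

end Chains

section Prism

variable (K : DeltaComplex F n)

/-- The horizontal prism chain `w × [k, k+1]`. -/
noncomputable def hchain (w : K.Cell →₀ F) (k : ℤ) : PCell K.Cell →₀ F :=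
  mapDomain (PCell.horiz · k) w

lemma vchain_eq_mapDomain (w : K.Cell →₀ F) (t : ℤ) :
    vchain K w t = mapDomain (PCell.vert · t) w := rfl

lemma hchain_zero (k : ℤ) : hchain K 0 k = 0 := mapDomain_zero

lemma hchain_eq_sum (w : K.Cell →₀ F) (k : ℤ) :
    hchain K w k = ∑ σ, single (PCell.horiz σ k) (w σ) := by
  rw [hchain, mapDomain, Finsupp.sum_fintype _ _ (by simp)]

lemma vchain_apply_vert (w : K.Cell →₀ F) (t : ℤ) (ρ : K.Cell) :
    vchain K w t (PCell.vert ρ t) = w ρ :=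
  mapDomain_apply (fun _ _ h => (PCell.vert.inj h).1) w ρ

lemma vchain_apply_of_ne {w : K.Cell →₀ F} {t : ℤ} {x : PCell K.Cell}
    (hx : ∀ ρ, x ≠ PCell.vert ρ t) : vchain K w t x = 0 :=
  mapDomain_of_notMem_range w x (by rintro ⟨ρ, rfl⟩; exact hx ρ rfl)

lemma hchain_apply_vert (w : K.Cell →₀ F) (k : ℤ) (ρ : K.Cell) (m : ℤ) :
    hchain K w k (PCell.vert ρ m) = 0 :=
  mapDomain_of_notMem_range w _ (by rintro ⟨σ, h⟩; cases h)

lemma hchain_apply_horiz (w : K.Cell →₀ F) (k : ℤ) (ρ : K.Cell) (m : ℤ) :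
    hchain K w k (PCell.horiz ρ m) = if k = m then w ρ else 0 := by
  split_ifs with h
  · subst h
    exact mapDomain_apply (fun _ _ h => (PCell.horiz.inj h).1) w ρ
  · exact mapDomain_of_notMem_range w _ (by rintro ⟨σ, hσ⟩; cases hσ; exact h rfl)

lemma pcellBd_vert (τ : K.Cell) (i : ℤ) :
    pcellBd K (PCell.vert τ i) = vchain K (K.bdry τ) i := rfl

lemma pcellBd_horiz (σ : K.Cell) (i : ℤ) :
    pcellBd K (PCell.horiz σ i) =
      single (PCell.vert σ (i + 1)) 1 - single (PCell.vert σ i) 1 - hchain K (K.bdry σ) i := rfl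

lemma pbd_eq_linearCombination (c : PCell K.Cell →₀ F) :
    pbd K c = linearCombination F (pcellBd K) c :=
  (linearCombination_apply F c).symm

lemma pbd_add (c c' : PCell K.Cell →₀ F) : pbd K (c + c') = pbd K c + pbd K c' := by
  simp only [pbd_eq_linearCombination, map_add]

lemma pbd_sum {ι : Type} (s : Finset ι) (c : ι → PCell K.Cell →₀ F) :
    pbd K (∑ i ∈ s, c i) = ∑ i ∈ s, pbd K (c i) := by
  simp only [pbd_eq_linearCombination, map_sum]

lemma pbd_single (x : PCell K.Cell) (a : F) : pbd K (single x a) = a • pcellBd K x := by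
  rw [pbd_eq_linearCombination, linearCombination_single]

lemma pbd_hchain (w : K.Cell →₀ F) (k : ℤ) :
    pbd K (hchain K w k) = vchain K w (k + 1) - vchain K w k - hchain K (bd K w) k := by
  simp only [vchain_eq_mapDomain, hchain]
  induction w using Finsupp.induction_linear with
  | zero => simp [pbd, bd]
  | add w w' h h' =>
    rw [mapDomain_add, pbd_add, h, h', bd_add, mapDomain_add, mapDomain_add, mapDomain_add]
    abel
  | single τ a =>
    rw [mapDomain_single, pbd_single, bd_single, mapDomain_smul, mapDomain_single,
      mapDomain_single]
    simp only [pcellBd, smul_sub, smul_single, smul_eq_mul, mul_one]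
    rfl

lemma suppOn_vchain {w : K.Cell →₀ F} {d : ℤ}
    (hw : SuppOn w fun ρ => K.tmin ρ ≤ d ∧ d ≤ K.tmax ρ) :
    SuppOn (vchain K w d) (inSub K d (n + 1)) := by
  intro x hx
  obtain ⟨ρ, rfl⟩ : ∃ ρ, x = PCell.vert ρ d := by
    by_contra h
    exact hx (vchain_apply_of_ne K fun ρ hρ => h ⟨ρ, hρ⟩)
  rw [vchain_apply_vert] at hx
  have hρ := hw ρ hx
  have := K.tmax_le ρ
  exact ⟨hρ, le_rfl, by omega⟩

/-- The lift of a single simplex `τ` entering at time `s`: the vertical cell `τ×s`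
followed by the horizontal prism `(∂τ)×[s,f]`. -/
noncomputable def liftSimplex (τ : K.Cell) (s f : ℤ) : PCell K.Cell →₀ F :=
  single (PCell.vert τ s) 1 + ∑ k ∈ Finset.Ico s f, hchain K (K.bdry τ) k

lemma pbd_liftSimplex (τ : K.Cell) {s f : ℤ} (h : s ≤ f) :
    pbd K (liftSimplex K τ s f) = vchain K (K.bdry τ) f := by
  have hvert : pbd K (single (PCell.vert τ s) 1) = vchain K (K.bdry τ) s := by
    rw [pbd_single, one_smul, pcellBd_vert]
  simp only [liftSimplex, pbd_add, pbd_sum, pbd_hchain, bd_bdry, hchain_zero, sub_zero, hvert,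
    Int.sum_Ico_sub (vchain K (K.bdry τ)) h, add_sub_cancel]

lemma liftSimplex_apply_vert (τ : K.Cell) (s f : ℤ) (ρ : K.Cell) (m : ℤ) :
    liftSimplex K τ s f (PCell.vert ρ m) = if τ = ρ ∧ s = m then 1 else 0 := by
  simp [liftSimplex, hchain_apply_vert, single_apply]

lemma liftSimplex_apply_horiz (τ : K.Cell) (s f : ℤ) (ρ : K.Cell) (m : ℤ) :
    liftSimplex K τ s f (PCell.horiz ρ m) = if s ≤ m ∧ m < f then K.bdry τ ρ else 0 := by
  simp [liftSimplex, hchain_apply_horiz]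

end Prism

section LiftCycle

variable (K : DeltaComplex F n)

/-- The part of `z` that Lift-Cycle lifts to the prism. -/
noncomputable def restrictMeeting (b d : ℤ) (z : K.Cell →₀ F) : K.Cell →₀ F :=
  z.filter fun τ => K.tmin τ ≤ d ∧ b ≤ K.tmax τ

variable {K} {z : K.Cell →₀ F} {b d : ℤ} {t : K.Cell → ℤ}

lemma ValidTimes.of_restrictMeeting (ht : ValidTimes K z b d t) {τ : K.Cell}
    (hτ : restrictMeeting K b d z τ ≠ 0) :
    K.tmin τ ≤ t τ ∧ t τ ≤ K.tmax τ ∧ b ≤ t τ ∧ t τ ≤ d := by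
  simp only [restrictMeeting, filter_apply] at hτ
  split_ifs at hτ with hp
  · exact ht τ hτ hp.1 hp.2
  · exact absurd rfl hτ

lemma suppOn_sub_restrictMeeting (hz : SuppOn z fun ρ => b ≤ K.tmax ρ) :
    SuppOn (z - restrictMeeting K b d z) fun ρ => d < K.tmax ρ := by
  intro ρ hρ
  have hb : b ≤ K.tmax ρ := by
    by_contra hb
    exact hρ (by simp [restrictMeeting, hb, hz.apply_eq_zero hb])
  have hd : d < K.tmin ρ := by
    by_contra hd
    exact hρ (by simp [restrictMeeting, not_lt.mp hd, hb])
  exact hd.trans (K.tmin_lt_tmax ρ)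

lemma suppOn_bd_restrictMeeting (hz : SuppOn z fun ρ => b ≤ K.tmax ρ)
    (hbz : SuppOn (bd K z) fun ρ => d ≤ K.tmax ρ) :
    SuppOn (bd K (restrictMeeting K b d z)) fun ρ => K.tmin ρ ≤ d ∧ d ≤ K.tmax ρ := by
  have hmin : SuppOn (restrictMeeting K b d z) fun ρ => K.tmin ρ ≤ d := by
    intro ρ hρ
    by_contra h
    exact hρ (by simp [restrictMeeting, h])
  have hrest : SuppOn (bd K (z - restrictMeeting K b d z)) fun ρ => d ≤ K.tmax ρ :=
    (suppOn_bd_of_le_tmax K ((suppOn_sub_restrictMeeting hz).mono fun _ => le_of_lt)).mono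
      fun _ => le_of_lt
  have hmax : SuppOn (bd K (restrictMeeting K b d z)) fun ρ => d ≤ K.tmax ρ := by
    simpa [bd_sub] using hbz.sub hrest
  exact fun ρ hρ => ⟨(suppOn_bd_of_tmin_le K hmin ρ hρ).le, hmax ρ hρ⟩

lemma liftCycle_eq_sum_liftSimplex (hbd : b ≤ d) (ht : ValidTimes K z b d t) :
    liftCycle K z b d 0 t =
      (restrictMeeting K b d z).sum fun τ a => a • liftSimplex K τ (t τ) d := by
  rw [restrictMeeting, sum_filter_index, support_filter]
  have hcomm (σ : K.Cell) :
      ∑ k ∈ Finset.Icc b (d - 1), ∑ τ ∈ z.support with (K.tmin τ ≤ d ∧ b ≤ K.tmax τ) ∧ t τ ≤ k,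
        single (PCell.horiz σ k) (z τ * K.bdry τ σ) =
      ∑ τ ∈ z.support with K.tmin τ ≤ d ∧ b ≤ K.tmax τ, ∑ k ∈ Finset.Ico (t τ) d,
        single (PCell.horiz σ k) (z τ * K.bdry τ σ) := by
    refine Finset.sum_comm' fun k τ => ?_
    simp only [Finset.mem_filter, Finset.mem_Icc, Finset.mem_Ico, mem_support_iff]
    constructor
    · rintro ⟨hk, hz, hτ, htk⟩
      exact ⟨⟨htk, by omega⟩, hz, hτ⟩
    · rintro ⟨⟨htk, hkd⟩, hz, hτ⟩
      have := (ht τ hz hτ.1 hτ.2).2.2.1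
      exact ⟨by omega, hz, hτ, htk⟩
  simp only [liftCycle, max_eq_right hbd, min_eq_left hbd, if_pos hbd, one_mul, coe_zero,
    Pi.zero_apply, zero_add, liftSimplex, smul_add, Finset.sum_add_distrib, smul_single,
    smul_eq_mul, mul_one, Finset.smul_sum, hchain_eq_sum, single_finsetSum]
  rw [Finset.sum_congr rfl fun σ _ => hcomm σ, Finset.sum_comm]
  exact congrArg _ (Finset.sum_congr rfl fun τ _ => Finset.sum_comm)

lemma liftCycle_apply (hbd : b ≤ d) (ht : ValidTimes K z b d t) (x : PCell K.Cell) :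
    liftCycle K z b d 0 t x =
      ∑ τ ∈ (restrictMeeting K b d z).support,
        restrictMeeting K b d z τ * liftSimplex K τ (t τ) d x := by
  rw [liftCycle_eq_sum_liftSimplex hbd ht, Finsupp.sum_apply]
  rfl

lemma pbd_liftCycle (hbd : b ≤ d) (ht : ValidTimes K z b d t) :
    pbd K (liftCycle K z b d 0 t) = vchain K (bd K (restrictMeeting K b d z)) d := by
  rw [liftCycle_eq_sum_liftSimplex hbd ht, pbd_eq_linearCombination, map_finsuppSum, bd,
    vchain_eq_mapDomain, mapDomain_sum]
  refine Finsupp.sum_congr fun τ hτ => ?_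
  rw [map_smul, ← pbd_eq_linearCombination,
    pbd_liftSimplex K τ (ht.of_restrictMeeting (mem_support_iff.mp hτ)).2.2.2, mapDomain_smul]
  rfl

/-- Past the top of the support of `ρ` every coface of `ρ` has already been passed, so the
horizontal coefficient is the full boundary coefficient. -/
lemma liftCycle_apply_horiz_of_tmax_le (hbd : b ≤ d) (ht : ValidTimes K z b d t) {ρ : K.Cell}
    {m : ℤ} (hmd : m < d) (hρ : K.tmax ρ ≤ m) :
    liftCycle K z b d 0 t (PCell.horiz ρ m) = bd K (restrictMeeting K b d z) ρ := by
  rw [liftCycle_apply hbd ht, bd_apply]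
  refine Finset.sum_congr rfl fun τ hτ => ?_
  rw [liftSimplex_apply_horiz]
  by_cases hface : K.bdry τ ρ = 0
  · simp [hface]
  have := (K.nest τ ρ hface).2
  have := (ht.of_restrictMeeting (mem_support_iff.mp hτ)).2.1
  rw [if_pos ⟨by omega, hmd⟩]

lemma suppOn_liftCycle (hbd : b ≤ d) (hz : SuppOn z fun ρ => b ≤ K.tmax ρ)
    (hbz : SuppOn (bd K z) fun ρ => d ≤ K.tmax ρ) (ht : ValidTimes K z b d t) :
    SuppOn (liftCycle K z b d 0 t) (inSub K b (n + 1)) := by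
  intro x hx
  have hx' := hx
  rw [liftCycle_apply hbd ht] at hx
  obtain ⟨τ, hτ, hne⟩ := Finset.exists_ne_zero_of_sum_ne_zero hx
  obtain ⟨h1, h2, h3, -⟩ := ht.of_restrictMeeting (mem_support_iff.mp hτ)
  cases x with
  | vert ρ m =>
    rw [liftSimplex_apply_vert] at hne
    obtain ⟨rfl, rfl⟩ : τ = ρ ∧ t τ = m := by
      by_contra h
      simp [h] at hne
    have := K.tmax_le τ
    exact ⟨⟨h1, h2⟩, h3, by omega⟩
  | horiz ρ m =>
    rw [liftSimplex_apply_horiz] at hne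
    obtain ⟨⟨htm, hmd⟩, hface⟩ : (t τ ≤ m ∧ m < d) ∧ K.bdry τ ρ ≠ 0 := by
      split_ifs at hne with h
      · exact ⟨h, right_ne_zero_of_mul hne⟩
      · simp at hne
    have hmin := (K.nest τ ρ hface).1
    have hmax : m < K.tmax ρ := by
      by_contra hle
      rw [liftCycle_apply_horiz_of_tmax_le hbd ht hmd (not_lt.mp hle)] at hx'
      have := (suppOn_bd_restrictMeeting hz hbz ρ hx').2
      omega
    have := K.tmax_le ρ
    exact ⟨⟨by omega, by omega⟩, by omega, by omega⟩

theorem liftCycle_relCycle (hbd : b ≤ d) (hz : SuppOn z fun ρ => b ≤ K.tmax ρ)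
    (hbz : SuppOn (bd K z) fun ρ => d ≤ K.tmax ρ) (ht : ValidTimes K z b d t) :
    RelCycle K (inSub K b (n + 1)) (inSub K d (n + 1)) (liftCycle K z b d 0 t) := by
  refine ⟨suppOn_liftCycle hbd hz hbz ht, ?_⟩
  rw [pbd_liftCycle hbd ht]
  exact suppOn_vchain K (suppOn_bd_restrictMeeting hz hbz)

end LiftCycle

section Projection

variable (K : DeltaComplex F n)

noncomputable def prismProj : (PCell K.Cell →₀ F) →ₗ[F] (K.Cell →₀ F) :=
  linearCombination F fun
    | .vert ρ _ => single ρ 1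
    | .horiz _ _ => 0

lemma prismProj_single_vert (ρ : K.Cell) (i : ℤ) (a : F) :
    prismProj K (single (PCell.vert ρ i) a) = single ρ a := by
  simp [prismProj]

lemma prismProj_single_horiz (ρ : K.Cell) (i : ℤ) (a : F) :
    prismProj K (single (PCell.horiz ρ i) a) = 0 := by
  simp [prismProj]

lemma prismProj_vchain (w : K.Cell →₀ F) (t : ℤ) : prismProj K (vchain K w t) = w := by
  rw [vchain_eq_mapDomain]
  induction w using Finsupp.induction_linear with
  | zero => simp
  | add w w' h h' => rw [mapDomain_add, map_add, h, h']
  | single ρ a => rw [mapDomain_single, prismProj_single_vert]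

lemma prismProj_hchain (w : K.Cell →₀ F) (k : ℤ) : prismProj K (hchain K w k) = 0 := by
  rw [hchain]
  induction w using Finsupp.induction_linear with
  | zero => simp
  | add w w' h h' => rw [mapDomain_add, map_add, h, h', add_zero]
  | single ρ a => rw [mapDomain_single, prismProj_single_horiz]

lemma prismProj_pbd (c : PCell K.Cell →₀ F) : prismProj K (pbd K c) = bd K (prismProj K c) := by
  induction c using Finsupp.induction_linear with
  | zero => simp [pbd, bd]
  | add c c' h h' => rw [pbd_add, map_add, h, h', map_add, bd_add]
  | single x a =>
    rw [pbd_single, map_smul]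
    cases x with
    | vert ρ i =>
      rw [pcellBd_vert, prismProj_vchain, prismProj_single_vert, bd_single]
    | horiz ρ i =>
      rw [pcellBd_horiz, map_sub, map_sub, prismProj_single_vert, prismProj_single_vert,
        prismProj_hchain, prismProj_single_horiz, bd_zero, sub_self, sub_zero, smul_zero]

lemma prismProj_liftSimplex (τ : K.Cell) (s f : ℤ) :
    prismProj K (liftSimplex K τ s f) = single τ 1 := by
  simp [liftSimplex, prismProj_single_vert, prismProj_hchain]

lemma suppOn_prismProj {c : PCell K.Cell →₀ F} {i j : ℤ} (hc : SuppOn c (inSub K i j)) :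
    SuppOn (prismProj K c) fun ρ => i ≤ K.tmax ρ := by
  intro ρ hρ
  rw [prismProj, linearCombination_apply, Finsupp.sum_apply] at hρ
  obtain ⟨x, hx, hne⟩ := Finset.exists_ne_zero_of_sum_ne_zero hρ
  cases x with
  | vert ρ' i' =>
    obtain rfl : ρ' = ρ := by
      by_contra h
      simp [h] at hne
    obtain ⟨⟨-, hi'⟩, hi, -⟩ := hc _ (mem_support_iff.mp hx)
    exact hi.trans hi'
  | horiz => simp at hne

variable {K} {z : K.Cell →₀ F} {b d : ℤ} {t : K.Cell → ℤ}

lemma prismProj_liftCycle (hbd : b ≤ d) (ht : ValidTimes K z b d t) :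
    prismProj K (liftCycle K z b d 0 t) = restrictMeeting K b d z := by
  rw [liftCycle_eq_sum_liftSimplex hbd ht, map_finsuppSum]
  simp only [map_smul, prismProj_liftSimplex, smul_single, smul_eq_mul, mul_one]
  exact sum_single _

/-- The simplices of `z` that Lift-Cycle drops lie after `d`, so they join `γ`. -/
theorem exists_eq_add_bd_add_of_inImg (hbd : b ≤ d) (hz : SuppOn z fun ρ => b ≤ K.tmax ρ)
    (ht : ValidTimes K z b d t) {i j : ℤ}
    (h : InImg K (inSub K i (n + 1)) (inSub K j (n + 1)) (inSub K b (n + 1))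
      (inSub K d (n + 1)) (liftCycle K z b d 0 t)) :
    ∃ α β γ : K.Cell →₀ F, SuppOn α (fun ρ => i ≤ K.tmax ρ) ∧
      SuppOn (bd K α) (fun ρ => j ≤ K.tmax ρ) ∧ SuppOn γ (fun ρ => d ≤ K.tmax ρ) ∧
      z = α + bd K β + γ := by
  obtain ⟨α, β, γ, ⟨hα, hbα⟩, -, hγ, heq⟩ := h
  refine ⟨prismProj K α, prismProj K β, prismProj K γ + (z - restrictMeeting K b d z),
    suppOn_prismProj K hα, ?_,
    (suppOn_prismProj K hγ).add ((suppOn_sub_restrictMeeting hz).mono fun _ => le_of_lt), ?_⟩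
  · rw [← prismProj_pbd]
    exact suppOn_prismProj K hbα
  · have hproj := prismProj_liftCycle hbd ht
    rw [heq, map_add, map_add, prismProj_pbd] at hproj
    rw [← hproj]
    abel

end Projection

section Cone

variable (K : DeltaComplex F n)

lemma CCell.base_injective {C : Type} : Function.Injective (@CCell.base C) :=
  fun _ _ h => CCell.base.inj h

lemma CCell.cone_injective {C : Type} : Function.Injective (@CCell.cone C) :=
  fun _ _ h => CCell.cone.inj h

noncomputable def augmentation : (K.Cell →₀ F) →ₗ[F] F :=
  linearCombination F fun ρ => if K.dim ρ = 0 then 1 else 0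

lemma cbd_eq_linearCombination (c : CCell K.Cell →₀ F) :
    cbd K c = linearCombination F (ccellBd K) c :=
  (linearCombination_apply F c).symm

lemma cbd_add (c c' : CCell K.Cell →₀ F) : cbd K (c + c') = cbd K c + cbd K c' := by
  simp only [cbd_eq_linearCombination, map_add]

lemma cbd_sub (c c' : CCell K.Cell →₀ F) : cbd K (c - c') = cbd K c - cbd K c' := by
  simp only [cbd_eq_linearCombination, map_sub]

lemma cbd_smul (a : F) (c : CCell K.Cell →₀ F) : cbd K (a • c) = a • cbd K c := by
  simp only [cbd_eq_linearCombination, map_smul]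

lemma cbd_single (x : CCell K.Cell) (a : F) : cbd K (single x a) = a • ccellBd K x := by
  rw [cbd_eq_linearCombination, linearCombination_single]

lemma cbd_mapDomain_base (w : K.Cell →₀ F) :
    cbd K (mapDomain CCell.base w) = mapDomain CCell.base (bd K w) := by
  induction w using Finsupp.induction_linear with
  | zero => simp [cbd, bd]
  | add w w' h h' => rw [mapDomain_add, cbd_add, h, h', bd_add, mapDomain_add]
  | single ρ a =>
    rw [mapDomain_single, cbd_single, bd_single, mapDomain_smul]
    rfl

lemma cbd_mapDomain_cone (w : K.Cell →₀ F) :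
    cbd K (mapDomain CCell.cone w) = mapDomain CCell.base w - mapDomain CCell.cone (bd K w)
      - single CCell.omega (augmentation K w) := by
  induction w using Finsupp.induction_linear with
  | zero => simp [cbd, bd]
  | add w w' h h' =>
    rw [mapDomain_add, cbd_add, h, h', bd_add, mapDomain_add, mapDomain_add, map_add,
      single_add]
    abel
  | single ρ a =>
    rw [mapDomain_single, cbd_single, bd_single, mapDomain_smul, mapDomain_single]
    simp only [ccellBd, augmentation, linearCombination_single, smul_sub, smul_single,
      smul_eq_mul, mul_one]
    split_ifs <;> simp [mapDomain]

lemma basePart_apply (c : CCell K.Cell →₀ F) (σ : K.Cell) :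
    basePart K c σ = c (CCell.base σ) := by
  rw [basePart, Finsupp.sum_apply, Finsupp.sum, Finset.sum_eq_single (CCell.base σ)]
  · simp
  · rintro (ρ | _ | ρ) - h <;> simp_all
  · simp +contextual

end Cone

section Reduction

variable {K : DeltaComplex F n} {O : ConeOrder K} {R V : CCell K.Cell → (CCell K.Cell →₀ F)}

lemma ConeOrder.exists_eq_cone_of_omega_lt {x : CCell K.Cell}
    (hx : O.pos CCell.omega < O.pos x) : ∃ ρ, x = CCell.cone ρ := by
  rcases x with ρ | _ | ρ
  · exact absurd hx (O.base_lt_omega ρ).not_gt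
  · exact absurd hx (lt_irrefl _)
  · exact ⟨ρ, rfl⟩

lemma ConeOrder.tmax_le_of_pos_le {ρ τ : K.Cell}
    (h : O.pos (CCell.cone ρ) ≤ O.pos (CCell.cone τ)) : K.tmax τ ≤ K.tmax ρ :=
  not_lt.mp fun hlt => (O.cone_lt_cone τ ρ hlt).not_ge h

lemma exists_isLow {c : CCell K.Cell →₀ F} (hc : c ≠ 0) : ∃ ς, IsLow K O c ς := by
  obtain ⟨ς, hmem, hmax⟩ := Finset.exists_max_image c.support O.pos
    (support_nonempty_iff.mpr hc)
  exact ⟨ς, mem_support_iff.mp hmem, fun ρ hρ => hmax ρ (mem_support_iff.mpr hρ)⟩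

lemma IsLow.eq {c : CCell K.Cell →₀ F} {ς ς' : CCell K.Cell} (h : IsLow K O c ς)
    (h' : IsLow K O c ς') : ς = ς' :=
  O.inj (le_antisymm (h'.2 ς h.1) (h.2 ς' h'.1))

lemma IsLow.add_of_lt {c c' : CCell K.Cell →₀ F} {ς : CCell K.Cell} (h : IsLow K O c ς)
    (h' : SuppOn c' fun x => O.pos x < O.pos ς) : IsLow K O (c + c') ς := by
  refine ⟨by simp [h.1, h'.apply_eq_zero (lt_irrefl _)], fun x hx => ?_⟩
  by_cases hc : c x = 0
  · exact (h' x (by simpa [hc] using hx)).le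
  · exact h.2 x hc

lemma IsLow.smul {c : CCell K.Cell →₀ F} {ς : CCell K.Cell} (h : IsLow K O c ς) {q : F}
    (hq : q ≠ 0) : IsLow K O (q • c) ς :=
  ⟨by simp [hq, h.1], fun x hx => h.2 x (right_ne_zero_of_mul hx)⟩

lemma suppOn_sub_smul_of_isLow {c c' : CCell K.Cell →₀ F} {ς : CCell K.Cell}
    (hc : IsLow K O c ς) (hc' : IsLow K O c' ς) (q : F) :
    SuppOn (c - q • c') fun x => O.pos x ≤ O.pos ς :=
  SuppOn.sub (S := fun x => O.pos x ≤ O.pos ς) hc.2 (SuppOn.smul hc'.2 q)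

lemma IsReduction.pos_lt (hRV : IsReduction K O R V) {x y : CCell K.Cell} (h : R x y ≠ 0) :
    O.pos y < O.pos x := by
  rw [hRV.rdv, cbd_eq_linearCombination, linearCombination_apply, Finsupp.sum_apply] at h
  obtain ⟨x', hx', hne⟩ := Finset.exists_ne_zero_of_sum_ne_zero h
  have hface : ccellBd K x' y ≠ 0 := by simpa using right_ne_zero_of_mul (by simpa using hne)
  exact (O.faces_first x' y hface).trans_le (hRV.upper x x' (mem_support_iff.mp hx'))

lemma LazyReduces.suppOn_pos_le {τ : CCell K.Cell} {c v c' v' : CCell K.Cell →₀ F}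
    (h : LazyReduces K O R V τ c v c' v') {N : ℕ} (hc : SuppOn c fun x => O.pos x ≤ N) :
    SuppOn c' fun x => O.pos x ≤ N := by
  induction h with
  | done => exact hc
  | step c v c' v' τ' σ hlt hlow hr next ih =>
    exact ih ((suppOn_sub_smul_of_isLow hlow hr _).mono fun x hx => hx.trans (hc σ hlow.1))

/-- If the final pivot lies after `ω`, so do all the pivots met on the way, hence only columns
of cone cells are subtracted. -/
lemma LazyReduces.suppOn_omega_lt {τ : CCell K.Cell} {c v c' v' : CCell K.Cell →₀ F}
    (h : LazyReduces K O R V τ c v c' v')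
    (IH : ∀ τ', O.pos τ' < O.pos τ → ∀ ς, O.pos CCell.omega < O.pos ς →
      IsLow K O (R τ') ς → SuppOn (V τ') fun x => O.pos CCell.omega < O.pos x)
    {ς : CCell K.Cell} (hς : O.pos CCell.omega < O.pos ς) (hlow : IsLow K O c' ς)
    (hv : SuppOn v fun x => O.pos CCell.omega < O.pos x) :
    SuppOn v' fun x => O.pos CCell.omega < O.pos x := by
  induction h with
  | done => exact hv
  | step c v c' v' τ' σ hlt hlowσ hr next ih =>
    have hςσ : O.pos ς ≤ O.pos σ :=
      next.suppOn_pos_le (suppOn_sub_smul_of_isLow hlowσ hr _) ς hlow.1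
    exact ih hlow (hv.sub ((IH τ' hlt σ (hς.trans_le hςσ) hr).smul _))

theorem IsLazyReduction.suppOn_omega_lt (hRV : IsReduction K O R V)
    (hlazy : IsLazyReduction K O R V) {x ς : CCell K.Cell}
    (hς : O.pos CCell.omega < O.pos ς) (hlow : IsLow K O (R x) ς) :
    SuppOn (V x) fun y => O.pos CCell.omega < O.pos y := by
  induction hN : O.pos x using Nat.strong_induction_on generalizing x ς with
  | _ N IH =>
    refine (hlazy x).suppOn_omega_lt (fun τ' hτ' ς' hς' hlow' => IH _ (hN ▸ hτ') hς' hlow' rfl)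
      hς hlow fun y hy => ?_
    obtain rfl : x = y := by
      by_contra h
      simp [h] at hy
    exact hς.trans (hRV.pos_lt hlow.1)

variable (K O R) in
def LowAmongBefore (N : ℕ) (c : CCell K.Cell →₀ F) : Prop :=
  c = 0 ∨ ∃ τ' ς, O.pos τ' < N ∧ IsLow K O (R τ') ς ∧ IsLow K O c ς

lemma LowAmongBefore.mono {N N' : ℕ} {c : CCell K.Cell →₀ F} (h : LowAmongBefore K O R N c)
    (hN : N ≤ N') : LowAmongBefore K O R N' c :=
  h.imp_right fun ⟨τ', ς, hτ', hR, hc⟩ => ⟨τ', ς, hτ'.trans_le hN, hR, hc⟩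

/-- Pivots of distinct columns of a reduced matrix never cancel. -/
lemma LowAmongBefore.add_smul (hRV : IsReduction K O R V) {N N' : ℕ}
    {c : CCell K.Cell →₀ F} (hc : LowAmongBefore K O R N c) {τ₁ : CCell K.Cell}
    (h₁ : N ≤ O.pos τ₁) (h₁' : O.pos τ₁ < N') (q : F) :
    LowAmongBefore K O R N' (c + q • R τ₁) := by
  by_cases hqR : q • R τ₁ = 0
  · rw [hqR, add_zero]
    exact hc.mono (h₁.trans h₁'.le)
  obtain ⟨ς₁, hς₁⟩ := exists_isLow (O := O) (right_ne_zero_of_smul hqR)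
  have hq₁ : IsLow K O (q • R τ₁) ς₁ := hς₁.smul (left_ne_zero_of_smul hqR)
  right
  rcases hc with rfl | ⟨τ', ς, hτ', hR', hcς⟩
  · exact ⟨τ₁, ς₁, h₁', hς₁, by rwa [zero_add]⟩
  rcases lt_trichotomy (O.pos ς) (O.pos ς₁) with hlt | heq | hgt
  · refine ⟨τ₁, ς₁, h₁', hς₁, ?_⟩
    rw [add_comm]
    exact hq₁.add_of_lt fun x hx => (hcς.2 x hx).trans_lt hlt
  · have hne : τ' ≠ τ₁ := fun h => (h ▸ hτ').not_ge h₁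
    exact absurd hς₁ (O.inj heq ▸ hRV.reduced τ' τ₁ ς hne hR')
  · exact ⟨τ', ς, hτ'.trans_le (h₁.trans h₁'.le), hR',
      hcς.add_of_lt fun x hx => (hq₁.2 x hx).trans_lt hgt⟩

/-- Since `V` is invertible upper-triangular, the boundary of a chain supported before `N`
is a combination of the columns of `R` before `N`. -/
theorem lowAmongBefore_cbd (hRV : IsReduction K O R V) (N : ℕ) (c : CCell K.Cell →₀ F)
    (hc : SuppOn c fun x => O.pos x < N) : LowAmongBefore K O R N (cbd K c) := by
  induction N using Nat.strong_induction_on generalizing c with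
  | _ N IH =>
    by_cases hc0 : c = 0
    · left
      simp [hc0, cbd]
    obtain ⟨τ₁, hτ₁⟩ := exists_isLow (O := O) hc0
    set q := c τ₁ / V τ₁ τ₁
    have hc₁ : SuppOn (c - q • V τ₁) fun x => O.pos x < O.pos τ₁ := by
      intro x hx
      have hle := suppOn_sub_smul_of_isLow hτ₁ ⟨hRV.diag τ₁, hRV.upper τ₁⟩ q x hx
      refine hle.lt_of_ne fun hpos => hx ?_
      rw [O.inj hpos]
      simp [q, div_mul_cancel₀ _ (hRV.diag τ₁)]
    have hsplit : cbd K c = cbd K (c - q • V τ₁) + q • R τ₁ := by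
      rw [cbd_sub, cbd_smul, ← hRV.rdv, sub_add_cancel]
    rw [hsplit]
    have hτ₁N := hc τ₁ hτ₁.1
    exact (IH _ hτ₁N _ hc₁).add_smul hRV le_rfl hτ₁N q

end Reduction

section Apex

variable {K : DeltaComplex F n} {O : ConeOrder K} {R V : CCell K.Cell → (CCell K.Cell →₀ F)}

lemma exists_V_cone_eq_mapDomain (hRV : IsReduction K O R V) (hlazy : IsLazyReduction K O R V)
    {τ σ : K.Cell} (hlow : IsLow K O (R (CCell.cone τ)) (CCell.cone σ)) :
    ∃ v : K.Cell →₀ F, V (CCell.cone τ) = mapDomain CCell.cone v := by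
  have hV := hlazy.suppOn_omega_lt hRV (O.omega_lt_cone σ) hlow
  refine ⟨_, (mapDomain_comapDomain _ CCell.cone_injective _ fun x hx => ?_).symm⟩
  obtain ⟨ρ, rfl⟩ := O.exists_eq_cone_of_omega_lt (hV x (mem_support_iff.mp hx))
  exact ⟨ρ, rfl⟩

variable {τ : K.Cell} {v : K.Cell →₀ F}

lemma R_cone_eq (hRV : IsReduction K O R V) (hV : V (CCell.cone τ) = mapDomain CCell.cone v) :
    R (CCell.cone τ) = mapDomain CCell.base v - mapDomain CCell.cone (bd K v)
      - single CCell.omega (augmentation K v) := by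
  rw [hRV.rdv, hV, cbd_mapDomain_cone]

lemma basePart_R_cone (hRV : IsReduction K O R V)
    (hV : V (CCell.cone τ) = mapDomain CCell.cone v) : basePart K (R (CCell.cone τ)) = v := by
  ext σ
  rw [basePart_apply, R_cone_eq hRV hV]
  simp [mapDomain_apply CCell.base_injective, mapDomain_of_notMem_range]

lemma R_cone_apply_cone (hRV : IsReduction K O R V)
    (hV : V (CCell.cone τ) = mapDomain CCell.cone v) (ρ : K.Cell) :
    R (CCell.cone τ) (CCell.cone ρ) = -bd K v ρ := by
  rw [R_cone_eq hRV hV]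
  simp [mapDomain_apply CCell.cone_injective, mapDomain_of_notMem_range]

lemma suppOn_of_V_cone_eq (hRV : IsReduction K O R V)
    (hV : V (CCell.cone τ) = mapDomain CCell.cone v) :
    SuppOn v fun ρ => K.tmax τ ≤ K.tmax ρ := by
  intro ρ hρ
  refine O.tmax_le_of_pos_le (hRV.upper _ _ ?_)
  rwa [hV, mapDomain_apply CCell.cone_injective]

lemma suppOn_bd_of_V_cone_eq (hRV : IsReduction K O R V)
    (hV : V (CCell.cone τ) = mapDomain CCell.cone v) {σ : K.Cell}
    (hlow : IsLow K O (R (CCell.cone τ)) (CCell.cone σ)) :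
    SuppOn (bd K v) fun ρ => K.tmax σ ≤ K.tmax ρ := by
  intro ρ hρ
  refine O.tmax_le_of_pos_le (hlow.2 _ ?_)
  rwa [R_cone_apply_cone hRV hV, neg_ne_zero]

/-- `ω ∗ (α + γ) + β` precedes `τ̄` in the cone filtration, and its boundary differs from
`R[τ̄]` only at `ω`, so it has the pivot `σ̄` of `R[τ̄]`. -/
theorem false_of_eq_add_bd_add_of_tmax_lt (hRV : IsReduction K O R V)
    (hV : V (CCell.cone τ) = mapDomain CCell.cone v) {σ : K.Cell}
    (hlow : IsLow K O (R (CCell.cone τ)) (CCell.cone σ)) (hτσ : K.tmax τ < K.tmax σ)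
    {α β γ : K.Cell →₀ F} (hα : SuppOn α fun ρ => K.tmax τ < K.tmax ρ)
    (hγ : SuppOn γ fun ρ => K.tmax σ ≤ K.tmax ρ) (hv : v = α + bd K β + γ) : False := by
  set c := mapDomain CCell.cone (α + γ) + mapDomain CCell.base β
  have hc : SuppOn c fun x => O.pos x < O.pos (CCell.cone τ) := by
    refine SuppOn.add (fun x hx => ?_) (fun x hx => ?_)
    · obtain ⟨ρ, rfl, hρ⟩ := exists_ne_zero_of_mapDomain_ne_zero hx
      exact O.cone_lt_cone ρ τ ((hα.add (hγ.mono fun _ h => hτσ.trans_le h)) ρ hρ)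
    · obtain ⟨ρ, rfl, -⟩ := exists_ne_zero_of_mapDomain_ne_zero hx
      exact (O.base_lt_omega ρ).trans (O.omega_lt_cone τ)
  have hcbd : cbd K c = R (CCell.cone τ) +
      single CCell.omega (augmentation K v - augmentation K (α + γ)) := by
    have hbase : mapDomain CCell.base v =
        mapDomain CCell.base (α + γ) + mapDomain CCell.base (bd K β) := by
      rw [hv, ← mapDomain_add, add_right_comm]
    rw [R_cone_eq hRV hV, bd_eq_of_eq_add_bd_add K hv, hbase, cbd_add, cbd_mapDomain_cone,
      cbd_mapDomain_base, bd_add, single_sub]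
    abel
  have hlowc : IsLow K O (cbd K c) (CCell.cone σ) := by
    rw [hcbd]
    refine hlow.add_of_lt fun x hx => ?_
    obtain rfl : x = CCell.omega := by
      by_contra h
      simp [Ne.symm h] at hx
    exact O.omega_lt_cone σ
  rcases lowAmongBefore_cbd hRV _ c hc with h0 | ⟨τ', ς, hτ', hR', hς⟩
  · exact hlowc.1 (by rw [h0]; rfl)
  · obtain rfl := hς.eq hlowc
    exact hRV.reduced τ' _ _ (fun h => (h ▸ hτ').false) hR' hlow

theorem false_of_eq_add_bd_add_of_bd_tmax_lt (hRV : IsReduction K O R V)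
    (hV : V (CCell.cone τ) = mapDomain CCell.cone v) {σ : K.Cell}
    (hlow : IsLow K O (R (CCell.cone τ)) (CCell.cone σ))
    {α β γ : K.Cell →₀ F} (hα : SuppOn (bd K α) fun ρ => K.tmax σ < K.tmax ρ)
    (hγ : SuppOn γ fun ρ => K.tmax σ ≤ K.tmax ρ) (hv : v = α + bd K β + γ) : False := by
  apply hlow.1
  rw [R_cone_apply_cone hRV hV, bd_eq_of_eq_add_bd_add K hv, Finsupp.add_apply,
    hα.apply_eq_zero (lt_irrefl _), (suppOn_bd_of_le_tmax K hγ).apply_eq_zero (lt_irrefl _),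
    add_zero, neg_zero]

end Apex

/-- Claim (relative pairs lift to apex representatives, lazy reduction): assume `R = DV`
is obtained by the lazy reduction and let `(σ̄,τ̄)` be a persistence pair of cone simplices
with `max σ = d > b = max τ` (`low R[τ̄] = σ̄`). Then the chain `ẑ` produced by
`Lift-Cycle(R[τ̄] ∩ K, (b,d), 0)` is a relative cycle of `K̂[b,d)` and an apex
representative: `[ẑ]` lies neither in the image of `H(K̂[b+1,d)) → H(K̂[b,d))` nor in the
image of `H(K̂[b,d+1)) → H(K̂[b,d))`. -/
theorem statement_15 {F : Type} [Field F] {n : ℤ} (K : DeltaComplex F n) (O : ConeOrder K)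
    (R V : CCell K.Cell → (CCell K.Cell →₀ F)) (hRV : IsReduction K O R V)
    (hlazy : IsLazyReduction K O R V)
    (σ τ : K.Cell) (b d : ℤ) (hd : K.tmax σ = d) (hb : K.tmax τ = b) (hbd : b < d)
    (hlow : IsLow K O (R (CCell.cone τ)) (CCell.cone σ))
    (t : K.Cell → ℤ) (ht : ValidTimes K (basePart K (R (CCell.cone τ))) b d t) :
    RelCycle K (inSub K b (n + 1)) (inSub K d (n + 1))
      (liftCycle K (basePart K (R (CCell.cone τ))) b d 0 t) ∧
    ¬ InImg K (inSub K (b + 1) (n + 1)) (inSub K d (n + 1))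
        (inSub K b (n + 1)) (inSub K d (n + 1))
        (liftCycle K (basePart K (R (CCell.cone τ))) b d 0 t) ∧
    ¬ InImg K (inSub K b (n + 1)) (inSub K (d + 1) (n + 1))
        (inSub K b (n + 1)) (inSub K d (n + 1))
        (liftCycle K (basePart K (R (CCell.cone τ))) b d 0 t) := by
  obtain ⟨v, hV⟩ := exists_V_cone_eq_mapDomain hRV hlazy hlow
  rw [basePart_R_cone hRV hV] at ht ⊢
  subst hb hd
  have hv := suppOn_of_V_cone_eq hRV hV
  refine ⟨liftCycle_relCycle hbd.le hv (suppOn_bd_of_V_cone_eq hRV hV hlow) ht,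
    fun h => ?_, fun h => ?_⟩
  · obtain ⟨α, β, γ, hα, -, hγ, hvαβγ⟩ := exists_eq_add_bd_add_of_inImg hbd.le hv ht h
    exact false_of_eq_add_bd_add_of_tmax_lt hRV hV hlow hbd hα hγ hvαβγ
  · obtain ⟨α, β, γ, -, hα, hγ, hvαβγ⟩ := exists_eq_add_bd_add_of_inImg hbd.le hv ht h
    exact false_of_eq_add_bd_add_of_bd_tmax_lt hRV hV hlow hα hγ hvαβγ
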